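/- Let F be a field, let S be a finite nonempty subset of F, and let n, ℓ, d be natural numbers. Let φ₁, …, φ_ℓ be pairwise distinct multivariate polynomials in n variables over F, each of total degree at most d. If v = (v₁, …, v_n) is drawn uniformly at random from S^n (each coordinate independent and uniform on S), then the probability that there exist indices i ≠ j with φ_i(v) = φ_j(v) is at most ℓ²·d / |S|. -/

import Mathlib

open scoped Classical

open Finset MvPolynomial

theorem Finset.card_filter_exists_le_sum {ι α : Type*} [Fintype ι] (s : Finset α)
    (P : ι → α → Prop) [∀ i, DecidablePred (P i)] [DecidablePred fun a => ∃ i, P i a] :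
    #{a ∈ s | ∃ i, P i a} ≤ ∑ i, #{a ∈ s | P i a} := by
  refine (card_le_card fun a ha => ?_).trans card_biUnion_le
  obtain ⟨has, i, hi⟩ := mem_filter.1 ha
  exact mem_biUnion.2 ⟨i, mem_univ i, mem_filter.2 ⟨has, hi⟩⟩

namespace MvPolynomial

variable {R : Type*} [CommRing R] [IsDomain R] {n d : ℕ}

theorem card_filter_eval_eq_div_le {p q : MvPolynomial (Fin n) R} (hpq : p ≠ q)
    (hp : p.totalDegree ≤ d) (hq : q.totalDegree ≤ d) (S : Finset R) :
    (#{v ∈ Fintype.piFinset fun _ => S | eval v p = eval v q} : ℝ) / (#S : ℝ) ^ n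
      ≤ d / #S := by
  have hsz := schwartz_zippel_totalDegree (sub_ne_zero.2 hpq) S
  simp only [map_sub, sub_eq_zero] at hsz
  have hdeg : (p - q).totalDegree ≤ d := (totalDegree_sub p q).trans (max_le hp hq)
  calc (#{v ∈ Fintype.piFinset fun _ => S | eval v p = eval v q} : ℝ) / (#S : ℝ) ^ n
      ≤ (p - q).totalDegree / #S := by
        have := (NNRat.cast_le (K := ℝ)).2 hsz
        push_cast at this
        exact this
    _ ≤ d / #S := by gcongr

end MvPolynomial

theorem subpathSum_probability_test_general {F : Type*} [Field F]
    (S : Finset F) (n ℓ d : ℕ)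
    (φ : Fin ℓ → MvPolynomial (Fin n) F)
    (hdist : Function.Injective φ)
    (hdeg : ∀ i, (φ i).totalDegree ≤ d) :
    (((Fintype.piFinset fun _ : Fin n => S).filter
        (fun v => ∃ i j : Fin ℓ, i ≠ j ∧
          MvPolynomial.eval v (φ i) = MvPolynomial.eval v (φ j))).card : ℝ)
      / (S.card : ℝ) ^ n
      ≤ ((ℓ : ℝ) ^ 2 * (d : ℝ)) / (S.card : ℝ) := by
  set G := Fintype.piFinset fun _ : Fin n => S
  have hpair : ∀ i j, (#{v ∈ G | i ≠ j ∧ eval v (φ i) = eval v (φ j)} : ℝ) / #S ^ n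
      ≤ d / #S := by
    intro i j
    by_cases hij : i = j
    · simp only [hij, ne_eq, not_true_eq_false, false_and, filter_false, card_empty,
        CharP.cast_eq_zero, zero_div]
      positivity
    · simpa [hij] using card_filter_eval_eq_div_le (hdist.ne hij) (hdeg i) (hdeg j) S
  have hunion : #{v ∈ G | ∃ i j, i ≠ j ∧ eval v (φ i) = eval v (φ j)}
      ≤ ∑ i, ∑ j, #{v ∈ G | i ≠ j ∧ eval v (φ i) = eval v (φ j)} :=
    (card_filter_exists_le_sum G _).trans
      (sum_le_sum fun i _ => card_filter_exists_le_sum G _)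
  calc _ ≤ (∑ i, ∑ j, #{v ∈ G | i ≠ j ∧ eval v (φ i) = eval v (φ j)} : ℝ) / #S ^ n := by
        gcongr; exact_mod_cast hunion
    _ = ∑ i, ∑ j, (#{v ∈ G | i ≠ j ∧ eval v (φ i) = eval v (φ j)} : ℝ) / #S ^ n := by
        simp only [sum_div]
    _ ≤ ∑ _i : Fin ℓ, ∑ _j : Fin ℓ, (d / #S : ℝ) :=
        sum_le_sum fun i _ => sum_le_sum fun j _ => hpair i j
    _ = ℓ ^ 2 * d / #S := by simp [sq, mul_div_assoc, mul_assoc]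

/-- **Probability test for subpath sums (union bound + Schwartz–Zippel).**
If `φ₁, …, φ_ℓ` are pairwise distinct multivariate polynomials in `n` variables over a
field `F`, each of total degree at most `d`, and `v` is drawn uniformly from `S^n` for a
finite nonempty `S ⊆ F`, then the probability that some pair of distinct polynomials agree
at `v` is at most `ℓ² · d / |S|`. -/
theorem subpathSum_probability_test {F : Type*} [Field F]
    (S : Finset F) (hS : S.Nonempty) (n ℓ d : ℕ)
    (φ : Fin ℓ → MvPolynomial (Fin n) F)
    (hdist : Function.Injective φ)
    (hdeg : ∀ i, (φ i).totalDegree ≤ d) :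
    (((Fintype.piFinset fun _ : Fin n => S).filter
        (fun v => ∃ i j : Fin ℓ, i ≠ j ∧
          MvPolynomial.eval v (φ i) = MvPolynomial.eval v (φ j))).card : ℝ)
      / (S.card : ℝ) ^ n
      ≤ ((ℓ : ℝ) ^ 2 * (d : ℝ)) / (S.card : ℝ) :=
  subpathSum_probability_test_general S n ℓ d φ hdist hdeg
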